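/- Let G be a path on 3 vertices 1–2–3 (only edges (1,2) and (2,3)) and θ_1,θ_2,θ_3 positive with θ_1+θ_2 < 1 and θ_2+θ_3 < 1. Then the rates ν_1 = θ_1/(1−θ_1−θ_2), ν_2 = θ_2(1−θ_2)/((1−θ_1−θ_2)(1−θ_2−θ_3)), ν_3 = θ_3/(1−θ_2−θ_3) are the unique positive rates achieving hard-core marginals (θ_1,θ_2,θ_3): any positive (ν_1,ν_2,ν_3) realizing these marginals must equal this vector. -/
import Mathlib


open scoped Classical
open Finset

/-- Weight of a 0-1 configuration `z` with back-off rates `ν`. -/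
noncomputable def hcWeight {n : ℕ} (ν : Fin n → ℝ) (z : Fin n → Bool) : ℝ :=
  ∏ i, if z i then ν i else 1

/-- `z` is an independent-set indicator vector for adjacency `A`. -/
def hcIndep {n : ℕ} (A : Fin n → Fin n → Prop) (z : Fin n → Bool) : Prop :=
  ∀ i j, A i j → ¬(z i = true ∧ z j = true)

/-- Normalizing constant of the hard-core model. -/
noncomputable def hcZ (n : ℕ) (A : Fin n → Fin n → Prop) (ν : Fin n → ℝ) : ℝ :=
  ∑ z : Fin n → Bool, if hcIndep A z then hcWeight ν z else 0

/-- Marginal activity probability of node `i` in the hard-core model. -/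
noncomputable def hcMarginal (n : ℕ) (A : Fin n → Fin n → Prop) (ν : Fin n → ℝ)
    (i : Fin n) : ℝ :=
  (∑ z : Fin n → Bool, if hcIndep A z ∧ z i = true then hcWeight ν z else 0) / hcZ n A ν

/-- Adjacency of the path `0 – 1 – 2` (paper vertices `1 – 2 – 3`). -/
def path3Adj (a b : Fin 3) : Prop :=
  a.val + 1 = b.val ∨ b.val + 1 = a.val


lemma sum_fn3 (f : (Fin 3 → Bool) → ℝ) :
    ∑ z : Fin 3 → Bool, f z =
      f ![false,false,false] + f ![true,false,false] + f ![false,true,false] +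
      f ![false,false,true] + f ![true,true,false] + f ![true,false,true] +
      f ![false,true,true] + f ![true,true,true] := by
  rw [← (Fin.consEquiv (fun _ : Fin 3 => Bool)).sum_comp,
      Fintype.sum_prod_type, Fintype.sum_bool]
  simp only [← (Fin.consEquiv (fun _ : Fin 2 => Bool)).sum_comp,
      ← (Fin.consEquiv (fun _ : Fin 1 => Bool)).sum_comp,
      Fintype.sum_prod_type, Fintype.sum_bool, Fintype.sum_unique]
  have e : ∀ (a b c : Bool) (g : Fin 0 → Bool),
      (Fin.consEquiv fun _ : Fin 3 => Bool)
        (a, (Fin.consEquiv fun _ : Fin 2 => Bool)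
          (b, (Fin.consEquiv fun _ : Fin 1 => Bool) (c, g))) = ![a,b,c] := by
    intro a b c g; funext i; fin_cases i <;> rfl
  rw [e,e,e,e,e,e,e,e]; ring

lemma indep_iff (z : Fin 3 → Bool) :
    hcIndep path3Adj z ↔ (¬(z 0 = true ∧ z 1 = true) ∧ ¬(z 1 = true ∧ z 2 = true)) := by
  constructor
  · intro h; exact ⟨h 0 1 (Or.inl rfl), h 1 2 (Or.inl rfl)⟩
  · rintro ⟨h1, h2⟩ i j hij
    fin_cases i <;> fin_cases j <;> simp [path3Adj] at hij ⊢ <;>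
      cases h0 : z 0 <;> cases hb : z 1 <;> cases hc : z 2 <;> simp_all

lemma Zval (ν : Fin 3 → ℝ) :
    hcZ 3 path3Adj ν = 1 + ν 0 + ν 1 + ν 2 + ν 0 * ν 2 := by
  rw [hcZ, sum_fn3]
  simp [indep_iff, hcWeight, Fin.prod_univ_three]

lemma num0 (ν : Fin 3 → ℝ) :
    (∑ z : Fin 3 → Bool, if hcIndep path3Adj z ∧ z 0 = true then hcWeight ν z else 0)
      = ν 0 + ν 0 * ν 2 := by
  rw [sum_fn3]; simp [indep_iff, hcWeight, Fin.prod_univ_three]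

lemma num1 (ν : Fin 3 → ℝ) :
    (∑ z : Fin 3 → Bool, if hcIndep path3Adj z ∧ z 1 = true then hcWeight ν z else 0)
      = ν 1 := by
  rw [sum_fn3]; simp [indep_iff, hcWeight, Fin.prod_univ_three]

lemma num2 (ν : Fin 3 → ℝ) :
    (∑ z : Fin 3 → Bool, if hcIndep path3Adj z ∧ z 2 = true then hcWeight ν z else 0)
      = ν 2 + ν 0 * ν 2 := by
  rw [sum_fn3]; simp [indep_iff, hcWeight, Fin.prod_univ_three]

/-- on the 3-path, the displayed rates are exactly the positive rates
achieving marginals `(θ₀, θ₁, θ₂)`: a positive rate vector achieves these marginals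
iff it equals the displayed one (this gives both existence and uniqueness). -/
theorem stmt16 (θ : Fin 3 → ℝ) (hpos : ∀ i, 0 < θ i)
    (h01 : θ 0 + θ 1 < 1) (h12 : θ 1 + θ 2 < 1) :
    ∀ ν : Fin 3 → ℝ, (∀ i, 0 < ν i) →
      ((∀ i, hcMarginal 3 path3Adj ν i = θ i) ↔
        (ν 0 = θ 0 / (1 - θ 0 - θ 1) ∧
         ν 1 = θ 1 * (1 - θ 1) / ((1 - θ 0 - θ 1) * (1 - θ 1 - θ 2)) ∧
         ν 2 = θ 2 / (1 - θ 1 - θ 2))) := by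
  intro ν hν
  have h0 := hν 0; have h1 := hν 1; have h2 := hν 2
  have t0 := hpos 0; have t1 := hpos 1; have t2 := hpos 2
  have ha : 0 < 1 - θ 0 - θ 1 := by linarith
  have hb : 0 < 1 - θ 1 - θ 2 := by linarith
  have hZpos : (0:ℝ) < 1 + ν 0 + ν 1 + ν 2 + ν 0 * ν 2 := by nlinarith
  constructor
  · intro h
    have e0 : ν 0 + ν 0 * ν 2 = θ 0 * (1 + ν 0 + ν 1 + ν 2 + ν 0 * ν 2) := by
      have := h 0; rw [hcMarginal, num0, Zval, div_eq_iff hZpos.ne'] at this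
      linarith [this]
    have e1 : ν 1 = θ 1 * (1 + ν 0 + ν 1 + ν 2 + ν 0 * ν 2) := by
      have := h 1; rw [hcMarginal, num1, Zval, div_eq_iff hZpos.ne'] at this
      linarith [this]
    have e2 : ν 2 + ν 0 * ν 2 = θ 2 * (1 + ν 0 + ν 1 + ν 2 + ν 0 * ν 2) := by
      have := h 2; rw [hcMarginal, num2, Zval, div_eq_iff hZpos.ne'] at this
      linarith [this]
    set Z : ℝ := 1 + ν 0 + ν 1 + ν 2 + ν 0 * ν 2 with hZdef
    have hA : 1 + ν 2 = Z * (1 - θ 0 - θ 1) := by linear_combination -e0 - e1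
    have hB : 1 + ν 0 = Z * (1 - θ 1 - θ 2) := by linear_combination -e1 - e2
    have hv0 : ν 0 = θ 0 / (1 - θ 0 - θ 1) := by
      have hc : ν 0 * ((1 - θ 0 - θ 1) * Z) = θ 0 * Z := by
        linear_combination e0 - ν 0 * hA
      rw [eq_div_iff ha.ne']
      have := mul_right_cancel₀ hZpos.ne' (by linarith [hc] : ν 0 * (1 - θ 0 - θ 1) * Z = θ 0 * Z)
      linarith [this]
    have hv2 : ν 2 = θ 2 / (1 - θ 1 - θ 2) := by
      have hc : ν 2 * ((1 - θ 1 - θ 2) * Z) = θ 2 * Z := by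
        linear_combination e2 - ν 2 * hB
      rw [eq_div_iff hb.ne']
      have := mul_right_cancel₀ hZpos.ne' (by linarith [hc] : ν 2 * (1 - θ 1 - θ 2) * Z = θ 2 * Z)
      linarith [this]
    have hC : (1 - θ 1) * Z = ((1 - θ 0 - θ 1) * (1 - θ 1 - θ 2) * Z) * Z := by
      linear_combination hZdef + e1 + (1 + ν 2) * hB + (Z * (1 - θ 1 - θ 2)) * hA
    have hZval : Z = (1 - θ 1) / ((1 - θ 0 - θ 1) * (1 - θ 1 - θ 2)) := by
      have hcancel := mul_right_cancel₀ hZpos.ne'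
        (by linarith [hC] : (1 - θ 1) * Z = (1 - θ 0 - θ 1) * (1 - θ 1 - θ 2) * Z * Z)
      rw [eq_div_iff (by positivity : ((1 - θ 0 - θ 1) * (1 - θ 1 - θ 2)) ≠ 0)]
      linarith [hcancel]
    refine ⟨hv0, ?_, hv2⟩
    rw [e1, hZval]; ring
  · rintro ⟨hv0, hv1, hv2⟩
    have m0 : hcMarginal 3 path3Adj ν 0 = θ 0 := by
      rw [hcMarginal, num0, Zval, div_eq_iff hZpos.ne', hv0, hv1, hv2]
      field_simp
      ring
    have m1 : hcMarginal 3 path3Adj ν 1 = θ 1 := by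
      rw [hcMarginal, num1, Zval, div_eq_iff hZpos.ne', hv0, hv1, hv2]
      field_simp
      ring
    have m2 : hcMarginal 3 path3Adj ν 2 = θ 2 := by
      rw [hcMarginal, num2, Zval, div_eq_iff hZpos.ne', hv0, hv1, hv2]
      field_simp
      ring
    intro i
    fin_cases i
    · exact m0
    · exact m1
    · exact m2
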